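/- arXiv:2309.04268 — 2 statements merged into one kernel-verified Lean document; each statement's English description precedes it below -/
import Mathlib

section
/- There exist absolute constants C4, C5 > 0 and an absolute constant D such that for every integer d ≥ D and every integer k with 1 ≤ k ≤ d^(0.99): C4 · k^(−3/2) ≤ N(d,k) · ν_d(k) ≤ C5 · k^(−3/2). -/
open Real Filter

/-- Distinct eigenvalues (up to constants) of the NTK on the sphere `S^d`:
`ν_d(k) = d^d · k^(k−2) · (k+d)^(−(k+d+1)) · (k² + k·d + d)`. -/
noncomputable def nuNT (d k : ℕ) : ℝ :=
  (d : ℝ) ^ (d : ℝ) * (k : ℝ) ^ ((k : ℝ) - 2) *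
    ((k : ℝ) + (d : ℝ)) ^ (-((k : ℝ) + (d : ℝ) + 1)) *
    ((k : ℝ) ^ 2 + (k : ℝ) * (d : ℝ) + (d : ℝ))

/-- Dimension of the space of spherical harmonics of degree `k` on `S^d ⊆ ℝ^(d+1)`. -/
def Nsph (d k : ℕ) : ℕ :=
  if k = 0 then 1
  else (k + d).choose k - (if 2 ≤ k then (k + d - 2).choose (k - 2) else 0)

/-- `λ_d(0) = 1` and `λ_d(k) = ν_d(k)` for `k ≥ 1`. -/
noncomputable def lamNT (d k : ℕ) : ℝ := if k = 0 then 1 else nuNT d k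

/-!
Stirling's formula with the effective bounds `√π ≤ n! / (√(2n) (n/e)^n) ≤ e/√2` turns
`C(k+d, k) ν_d(k)` into `√((k+d)/(2kd)) · (k² + kd + d)/(k²(k+d))` up to a factor in `[1/4, 2]`,
and for `k ≤ d` the latter is `k^(-3/2)` up to constants. Finally
`C(k+d-2, k-2) / C(k+d, k) = k(k-1) / ((k+d)(k+d-1)) ≤ 1/4` for `k ≤ d`, so `N(d,k)` is
`C(k+d, k)` up to a factor in `[3/4, 1]`; and `k ≤ d^0.99` forces `k ≤ d`.
-/

open scoped Nat

namespace Stirling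

theorem stirlingSeq_le_two {n : ℕ} (hn : n ≠ 0) : stirlingSeq n ≤ 2 := by
  obtain ⟨m, rfl⟩ := Nat.exists_eq_add_one_of_ne_zero hn
  calc stirlingSeq (m + 1) ≤ stirlingSeq 1 := stirlingSeq'_antitone (Nat.zero_le m)
    _ = exp 1 / √2 := stirlingSeq_one
    _ ≤ 2 := by
      rw [div_le_iff₀ (by positivity)]
      nlinarith [exp_one_lt_d9, Real.sq_sqrt (show (0:ℝ) ≤ 2 by norm_num), Real.sqrt_nonneg 2]

theorem one_le_stirlingSeq {n : ℕ} (hn : n ≠ 0) : 1 ≤ stirlingSeq n :=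
  calc (1 : ℝ) ≤ √π := Real.one_le_sqrt.2 (by linarith [pi_gt_three])
    _ ≤ stirlingSeq n := sqrt_pi_le_stirlingSeq hn

theorem factorial_eq_stirlingSeq_mul {n : ℕ} (hn : n ≠ 0) :
    (n ! : ℝ) = stirlingSeq n * (√(2 * n) * (n / exp 1) ^ n) := by
  have : (0 : ℝ) < n := by positivity
  rw [stirlingSeq, div_mul_cancel₀ _ (by positivity)]

end Stirling

open Stirling

theorem nuNT_eq {d k : ℕ} (hk : k ≠ 0) :
    nuNT d k = (d : ℝ) ^ d * (k : ℝ) ^ k / ((k : ℝ) + d) ^ (k + d) *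
      (((k : ℝ) ^ 2 + k * d + d) / ((k : ℝ) ^ 2 * (k + d))) := by
  have hk : (0 : ℝ) < k := by positivity
  have hkd : (0 : ℝ) < k + d := by positivity
  rw [nuNT, rpow_natCast, rpow_sub hk, rpow_natCast, rpow_neg hkd.le,
    show (k : ℝ) + d + 1 = ((k + d : ℕ) : ℝ) + 1 by push_cast; ring, rpow_add hkd, rpow_natCast,
    rpow_one]
  field_simp
  norm_num

/-- What `(k + d).choose k * nuNT d k` becomes when every factorial is replaced by
`√(2n) (n / e) ^ n`: all exponential factors cancel. -/
noncomputable def stirlingApproxChooseMulNuNT (d k : ℕ) : ℝ :=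
  √(((k : ℝ) + d) / (2 * k * d)) * (((k : ℝ) ^ 2 + k * d + d) / ((k : ℝ) ^ 2 * (k + d)))

theorem choose_mul_nuNT_eq {d k : ℕ} (hk : k ≠ 0) (hd : d ≠ 0) :
    ((k + d).choose k : ℝ) * nuNT d k =
      stirlingSeq (k + d) / (stirlingSeq k * stirlingSeq d) * stirlingApproxChooseMulNuNT d k := by
  have hk' : (0 : ℝ) < k := by positivity
  have hd' : (0 : ℝ) < d := by positivity
  have hsk := (one_le_stirlingSeq hk).trans_lt' one_pos
  have hsd := (one_le_stirlingSeq hd).trans_lt' one_pos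
  rw [Nat.cast_add_choose, factorial_eq_stirlingSeq_mul hk, factorial_eq_stirlingSeq_mul hd,
    factorial_eq_stirlingSeq_mul (by omega), nuNT_eq hk, stirlingApproxChooseMulNuNT]
  push_cast
  simp only [div_pow, pow_add (exp 1), Real.sqrt_div' _ (by positivity : (0 : ℝ) ≤ 2 * k * d),
    Real.sqrt_mul' _ hk'.le, Real.sqrt_mul' _ hd'.le,
    Real.sqrt_mul' _ (by positivity : (0 : ℝ) ≤ k + d)]
  field_simp

theorem rpow_neg_three_halves {x : ℝ} (hx : 0 < x) : x ^ (-(3 / 2 : ℝ)) = √x⁻¹ / x := by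
  rw [show -(3 / 2 : ℝ) = -(1 / 2) + -1 by norm_num, rpow_add hx, rpow_neg_one, rpow_neg hx.le,
    ← Real.sqrt_eq_rpow, Real.sqrt_inv, div_eq_mul_inv]

theorem stirlingApproxChooseMulNuNT_bounds {d k : ℕ} (hk : 1 ≤ k) (hkd : k ≤ d) :
    (k : ℝ) ^ (-(3 / 2 : ℝ)) / 3 ≤ stirlingApproxChooseMulNuNT d k ∧
      stirlingApproxChooseMulNuNT d k ≤ 2 * (k : ℝ) ^ (-(3 / 2 : ℝ)) := by
  have hk1 : (1 : ℝ) ≤ k := by exact_mod_cast hk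
  have hkd' : (k : ℝ) ≤ d := by exact_mod_cast hkd
  have hk0 : (0 : ℝ) < k := by linarith
  have hd0 : (0 : ℝ) < d := by linarith
  have hsqrt_lo : √(k : ℝ)⁻¹ / √2 ≤ √(((k : ℝ) + d) / (2 * k * d)) := by
    rw [← Real.sqrt_div' _ (by norm_num : (0:ℝ) ≤ 2)]
    refine Real.sqrt_le_sqrt ?_
    rw [div_le_div_iff₀ (by positivity) (by positivity),
      show (k : ℝ)⁻¹ * (2 * k * d) = 2 * d by field_simp]
    linarith
  have hsqrt_hi : √(((k : ℝ) + d) / (2 * k * d)) ≤ √(k : ℝ)⁻¹ := by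
    refine Real.sqrt_le_sqrt ?_
    rw [div_le_iff₀ (by positivity), show (k : ℝ)⁻¹ * (2 * k * d) = 2 * d by field_simp]
    linarith
  have hratio_lo : 1 / (2 * k) ≤ ((k : ℝ) ^ 2 + k * d + d) / ((k : ℝ) ^ 2 * (k + d)) := by
    rw [div_le_div_iff₀ (by positivity) (by positivity)]
    nlinarith
  have hratio_hi : ((k : ℝ) ^ 2 + k * d + d) / ((k : ℝ) ^ 2 * (k + d)) ≤ 2 / k := by
    rw [div_le_div_iff₀ (by positivity) (by positivity)]
    nlinarith [mul_le_mul_of_nonneg_right hk1 (mul_nonneg hk0.le hd0.le)]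
  have hsqrt2 : √2 ≤ 3 / 2 := by
    rw [Real.sqrt_le_left (by norm_num)]; norm_num
  rw [rpow_neg_three_halves hk0, stirlingApproxChooseMulNuNT]
  constructor
  · calc √(k : ℝ)⁻¹ / k / 3 ≤ √(k : ℝ)⁻¹ / √2 * (1 / (2 * k)) := by
          rw [div_div, div_mul_div_comm, mul_one]
          exact div_le_div_of_nonneg_left (by positivity) (by positivity) (by nlinarith)
      _ ≤ _ := by gcongr
  · calc _ ≤ √(k : ℝ)⁻¹ * (2 / k) := by gcongr
      _ = 2 * (√(k : ℝ)⁻¹ / k) := by ring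

theorem stirlingSeq_add_div_mul_mem_Icc {m n : ℕ} (hm : m ≠ 0) (hn : n ≠ 0) :
    stirlingSeq (m + n) / (stirlingSeq m * stirlingSeq n) ∈ Set.Icc (1 / 4 : ℝ) 2 := by
  have hmn : m + n ≠ 0 := by omega
  have hm1 := one_le_stirlingSeq hm
  have hn1 := one_le_stirlingSeq hn
  have hprod : 1 ≤ stirlingSeq m * stirlingSeq n := one_le_mul_of_one_le_of_one_le hm1 hn1
  constructor
  · rw [le_div_iff₀ (by positivity)]
    nlinarith [one_le_stirlingSeq hmn, stirlingSeq_le_two hm, stirlingSeq_le_two hn]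
  · rw [div_le_iff₀ (by positivity)]
    nlinarith [stirlingSeq_le_two hmn]

theorem choose_mul_nuNT_bounds {d k : ℕ} (hk : 1 ≤ k) (hkd : k ≤ d) :
    (k : ℝ) ^ (-(3 / 2 : ℝ)) / 12 ≤ ((k + d).choose k : ℝ) * nuNT d k ∧
      ((k + d).choose k : ℝ) * nuNT d k ≤ 4 * (k : ℝ) ^ (-(3 / 2 : ℝ)) := by
  obtain ⟨hr_lo, hr_hi⟩ := stirlingSeq_add_div_mul_mem_Icc (m := k) (n := d) (by omega) (by omega)
  obtain ⟨hA_lo, hA_hi⟩ := stirlingApproxChooseMulNuNT_bounds hk hkd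
  have hA : 0 ≤ stirlingApproxChooseMulNuNT d k := (by positivity : (0 : ℝ) ≤ _).trans hA_lo
  rw [choose_mul_nuNT_eq (by omega) (by omega)]
  constructor
  · calc (k : ℝ) ^ (-(3 / 2 : ℝ)) / 12 = 1 / 4 * ((k : ℝ) ^ (-(3 / 2 : ℝ)) / 3) := by ring
      _ ≤ _ := mul_le_mul hr_lo hA_lo (by positivity) (by linarith)
  · calc _ ≤ 2 * (2 * (k : ℝ) ^ (-(3 / 2 : ℝ))) := mul_le_mul hr_hi hA_hi hA (by norm_num)
      _ = _ := by ring

theorem four_mul_choose_le_choose_add_two {d j : ℕ} (hjd : j + 2 ≤ d) :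
    4 * (j + d).choose j ≤ (j + d + 2).choose (j + 2) := by
  have h1 := Nat.add_one_mul_choose_eq (j + d) j
  have h2 := Nat.add_one_mul_choose_eq (j + d + 1) (j + 1)
  rw [show j + d + 1 + 1 = j + d + 2 by omega] at h2
  have key : (j + d + 2) * (j + d + 1) * (j + d).choose j =
      (j + d + 2).choose (j + 2) * ((j + 2) * (j + 1)) := by
    calc _ = (j + d + 2) * ((j + d + 1) * (j + d).choose j) := by ring
      _ = (j + d + 2).choose (j + 2) * ((j + 2) * (j + 1)) := by rw [h1, ← mul_assoc, h2]; ring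
  have hfac : 4 * ((j + 2) * (j + 1)) ≤ (j + d + 2) * (j + d + 1) := by nlinarith
  refine Nat.le_of_mul_le_mul_left (c := (j + d + 2) * (j + d + 1)) ?_ (by positivity)
  calc _ = 4 * ((j + d + 2).choose (j + 2) * ((j + 2) * (j + 1))) := by rw [← key]; ring
    _ ≤ (j + d + 2).choose (j + 2) * ((j + d + 2) * (j + d + 1)) := by nlinarith
    _ = _ := by ring

theorem Nsph_le_choose (d k : ℕ) : Nsph d k ≤ (k + d).choose k := by
  unfold Nsph
  split_ifs <;> simp_all

theorem three_mul_choose_le_four_mul_Nsph {d k : ℕ} (hkd : k ≤ d) :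
    3 * (k + d).choose k ≤ 4 * Nsph d k := by
  rcases Nat.lt_or_ge k 2 with hk | hk
  · interval_cases k <;> simp [Nsph]
  obtain ⟨j, rfl⟩ := Nat.exists_eq_add_of_le' hk
  have := four_mul_choose_le_choose_add_two hkd
  rw [Nsph, if_neg (by omega), if_pos hk, show j + 2 + d - 2 = j + d by omega,
    Nat.add_sub_cancel, show j + 2 + d = j + d + 2 by omega]
  omega

theorem nuNT_nonneg (d k : ℕ) : 0 ≤ nuNT d k := by
  unfold nuNT
  positivity

/-- Absolute constants C4, C5 > 0 and D such that for all d ≥ D and 1 ≤ k ≤ d^0.99: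
C4·k^(−3/2) ≤ N(d,k)·ν_d(k) ≤ C5·k^(−3/2). -/
theorem Nsph_mul_nuNT_bounds_small_k :
    ∃ C4 C5 : ℝ, 0 < C4 ∧ 0 < C5 ∧ ∃ D : ℕ, ∀ d : ℕ, D ≤ d →
      ∀ k : ℕ, 1 ≤ k → (k : ℝ) ≤ (d : ℝ) ^ (0.99 : ℝ) →
        C4 * (k : ℝ) ^ (-(3 / 2 : ℝ)) ≤ (Nsph d k : ℝ) * nuNT d k ∧
        (Nsph d k : ℝ) * nuNT d k ≤ C5 * (k : ℝ) ^ (-(3 / 2 : ℝ)) := by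
  refine ⟨1 / 16, 4, by norm_num, by norm_num, 1, fun d hd k hk hk_le => ?_⟩
  have hkd : k ≤ d := by
    exact_mod_cast hk_le.trans (rpow_le_self_of_one_le (by exact_mod_cast hd) (by norm_num))
  obtain ⟨hlo, hhi⟩ := choose_mul_nuNT_bounds hk hkd
  have hN_lo : 3 * ((k + d).choose k : ℝ) ≤ 4 * Nsph d k := by
    exact_mod_cast three_mul_choose_le_four_mul_Nsph hkd
  have hN_hi : (Nsph d k : ℝ) ≤ (k + d).choose k := by exact_mod_cast Nsph_le_choose d k
  have hnu := nuNT_nonneg d k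
  constructor
  · calc 1 / 16 * (k : ℝ) ^ (-(3 / 2 : ℝ)) = 3 / 4 * ((k : ℝ) ^ (-(3 / 2 : ℝ)) / 12) := by ring
      _ ≤ 3 / 4 * (((k + d).choose k : ℝ) * nuNT d k) := by gcongr
      _ ≤ Nsph d k * nuNT d k := by nlinarith [mul_le_mul_of_nonneg_right hN_lo hnu]
  · calc (Nsph d k : ℝ) * nuNT d k ≤ (k + d).choose k * nuNT d k := by gcongr
      _ ≤ _ := hhi
end

section
/- There exist constants C1, C2 > 0 depending only on c and σ with the following property: for every real γ with 0 < γ < 4 and all constants 0 < c1 ≤ c2 < ∞, there exists a constant D depending only on γ, c1, c2, c, σ such that for every integer d ≥ D and every integer n with c1·d^γ ≤ n ≤ c2·d^γ, the population Mendelson complexity satisfies C1 · n^(−1/2) ≤ ε_n² ≤ C2 · n^(−1/2). -/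
open Real Filter

/-!
By Stirling's formula, `C(k+d,k) k^k d^d / (k+d)^(k+d) ≤ (e / 2π) √((k+d)/(kd))`, and this extra
square-root decay is exactly what makes `N(d,k) ν_d(k) ≤ 2 k^(-3/2)` uniformly in `d`. Hence the
series is bounded by an absolute constant `M`, so `n ε⁴ ≤ c²σ² M`.

For the lower bound the degree-2 term suffices: `N(d,2) = d(d+3)/2` and
`N(d,2) ν_d(2) ≥ e⁻²/2` because `(1 + 2/d)^d ≤ e²`. If `ε² ≥ ν_d(2)` this gives `n ε⁴ ≳ c²σ²`
directly; otherwise the term is at least `d² ε² / 2`, and since `γ < 4`, eventually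
`n ≤ c²σ² d⁴`, which again yields `n ε⁴ ≥ c²σ² / 4`.
-/

open scoped Nat

theorem factorial_le_exp_one_mul_sqrt_mul_pow {n : ℕ} (hn : n ≠ 0) :
    (n ! : ℝ) ≤ exp 1 * √n * (n / exp 1) ^ n := by
  obtain ⟨m, rfl⟩ := Nat.exists_eq_succ_of_ne_zero hn
  have hseq : Stirling.stirlingSeq (m + 1) ≤ exp 1 / √2 := by
    simpa [Stirling.stirlingSeq_one] using Stirling.stirlingSeq'_antitone (Nat.zero_le m)
  have hpos : 0 < √(2 * (m + 1 : ℕ)) * ((m + 1 : ℕ) / exp 1) ^ (m + 1) := by positivity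
  rw [Stirling.stirlingSeq, div_le_iff₀ hpos] at hseq
  refine hseq.trans_eq ?_
  rw [Real.sqrt_mul zero_le_two]
  field_simp

theorem choose_mul_pow_mul_pow_le {k d : ℕ} (hk : k ≠ 0) (hd : d ≠ 0) :
    ((k + d).choose k : ℝ) * (k ^ k * d ^ d) * (2 * π * √(k * d)) ≤
      exp 1 * √(k + d) * (k + d) ^ (k + d) := by
  have hfact : ((k + d).choose k : ℝ) * (k ! * d !) = (k + d)! := by
    have := Nat.choose_mul_factorial_mul_factorial (Nat.le_add_right k d)
    rw [Nat.add_sub_cancel_left, mul_assoc] at this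
    exact_mod_cast this
  have hsqrt : √(2 * π * k) * √(2 * π * d) = 2 * π * √(k * d) := by
    rw [← Real.sqrt_mul (by positivity),
      show 2 * π * k * (2 * π * d) = (2 * π) ^ 2 * (k * d) by ring,
      Real.sqrt_mul (by positivity), Real.sqrt_sq (by positivity)]
  have hlower := mul_le_mul (Stirling.le_factorial_stirling k) (Stirling.le_factorial_stirling d)
    (by positivity) (by positivity)
  have key := (mul_le_mul_of_nonneg_left hlower (Nat.cast_nonneg ((k + d).choose k))).trans
    (hfact.trans_le (factorial_le_exp_one_mul_sqrt_mul_pow (n := k + d) (by omega)))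
  rw [← div_le_div_iff_of_pos_right (by positivity : (0 : ℝ) < exp 1 ^ (k + d))]
  convert key using 1
  · rw [div_pow, div_pow, pow_add, ← hsqrt]
    field_simp
  · push_cast
    rw [div_pow]
    ring

theorem Nsph_le_two_mul_choose {d k : ℕ} (hd : 1 ≤ d) (hk : 1 ≤ k) :
    Nsph d k ≤ 2 * (k + d - 1).choose k := by
  obtain rfl | ⟨m, rfl⟩ : k = 1 ∨ ∃ m, k = m + 2 :=
    (eq_or_lt_of_le hk).imp Eq.symm fun _ => ⟨k - 2, by omega⟩
  · simp [Nsph]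
    omega
  · have hN : Nsph d (m + 2) = (m + d + 2).choose (m + 2) - (m + d).choose m := by
      simp [Nsph, show m + 2 + d = m + d + 2 by omega]
    have h₁ : (m + d + 2).choose (m + 2) =
        (m + d + 1).choose (m + 1) + (m + d + 1).choose (m + 2) := Nat.choose_succ_succ' _ _
    have h₂ : (m + d + 1).choose (m + 1) = (m + d).choose m + (m + d).choose (m + 1) :=
      Nat.choose_succ_succ' _ _
    have h₃ : (m + d + 1).choose (m + 2) = (m + d).choose (m + 1) + (m + d).choose (m + 2) :=
      Nat.choose_succ_succ' _ _
    rw [hN, show m + 2 + d - 1 = m + d + 1 by omega]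
    omega

theorem Nsph_mul_add_le {d k : ℕ} (hd : 1 ≤ d) (hk : 1 ≤ k) :
    (Nsph d k : ℝ) * (k + d) ≤ 2 * d * (k + d).choose k := by
  have hpascal := Nat.choose_mul_succ_eq (k + d - 1) k
  rw [show k + d - 1 + 1 = k + d by omega, Nat.add_sub_cancel_left] at hpascal
  have := Nat.mul_le_mul_right (k + d) (Nsph_le_two_mul_choose hd hk)
  rw [mul_assoc, hpascal] at this
  exact_mod_cast (show Nsph d k * (k + d) ≤ 2 * d * (k + d).choose k by linarith)

theorem nuNT_eq_div (d : ℕ) {k : ℕ} (hk : 1 ≤ k) :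
    nuNT d k = d ^ d * k ^ k * (k ^ 2 + k * d + d) / (k ^ 2 * (k + d) ^ (k + d + 1)) := by
  have hk₀ : (0 : ℝ) < k := by exact_mod_cast hk
  rw [nuNT, show (k : ℝ) - 2 = k - (2 : ℕ) by norm_num, Real.rpow_sub hk₀,
    show -((k : ℝ) + d + 1) = -((k + d + 1 : ℕ) : ℝ) by push_cast; ring,
    Real.rpow_neg (by positivity)]
  simp only [Real.rpow_natCast]
  field_simp

theorem two_mul_mul_choose_mul_pow_mul_pow_le {k d : ℕ} (hk : k ≠ 0) (hd : d ≠ 0) :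
    2 * d * (((k + d).choose k : ℝ) * (k ^ k * d ^ d)) * √k ≤ (k + d) ^ (k + d + 1) := by
  have hstirling := choose_mul_pow_mul_pow_le hk hd
  have hsqrt_d : √(d : ℝ) * √d = d := Real.mul_self_sqrt (by positivity)
  have hsqrt_le : √(d : ℝ) * √(k + d) ≤ k + d := by
    calc √(d : ℝ) * √(k + d) ≤ √(k + d) * √(k + d) := by
          gcongr; linarith [(k.cast_nonneg : (0 : ℝ) ≤ k)]
      _ = k + d := Real.mul_self_sqrt (by positivity)
  have hexp_le_pi : exp 1 ≤ π := by linarith [Real.exp_one_lt_d9, Real.pi_gt_d6]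
  rw [Real.sqrt_mul (by positivity)] at hstirling
  have hsd : 0 < √(d : ℝ) := Real.sqrt_pos.mpr (by positivity)
  refine le_of_mul_le_mul_right ?_ (mul_pos Real.pi_pos hsd)
  calc 2 * d * (((k + d).choose k : ℝ) * (k ^ k * d ^ d)) * √k * (π * √d)
      = d * (((k + d).choose k : ℝ) * (k ^ k * d ^ d) * (2 * π * (√k * √d))) := by ring
    _ ≤ d * (exp 1 * √(k + d) * (k + d) ^ (k + d)) := by gcongr
    _ = √d * (exp 1 * (√d * √(k + d)) * (k + d) ^ (k + d)) := by
        linear_combination (-(exp 1 * √(k + d) * (k + d) ^ (k + d))) * hsqrt_d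
    _ ≤ √d * (π * (k + d) * (k + d) ^ (k + d)) := by gcongr
    _ = (k + d) ^ (k + d + 1) * (π * √d) := by ring

theorem rpow_neg_three_halves_eq {x : ℝ} (hx : 0 < x) : x ^ (-(3 / 2 : ℝ)) = (x * √x)⁻¹ := by
  rw [Real.rpow_neg hx.le, show (3 / 2 : ℝ) = 1 + 1 / 2 by norm_num, Real.rpow_add hx,
    Real.rpow_one, ← Real.sqrt_eq_rpow]

theorem Nsph_mul_nuNT_le {d k : ℕ} (hd : 1 ≤ d) (hk : 1 ≤ k) :
    (Nsph d k : ℝ) * nuNT d k ≤ 2 * (k : ℝ) ^ (-(3 / 2 : ℝ)) := by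
  have hk₀ : (0 : ℝ) < k := by exact_mod_cast hk
  have hQ : (k : ℝ) ^ 2 + k * d + d ≤ 2 * k * (k + d) := by
    nlinarith [(by exact_mod_cast hk : (1 : ℝ) ≤ k)]
  have key : (Nsph d k : ℝ) * (d ^ d * k ^ k * (k ^ 2 + k * d + d)) * √k ≤
      2 * k * (k + d) ^ (k + d + 1) :=
    calc (Nsph d k : ℝ) * (d ^ d * k ^ k * (k ^ 2 + k * d + d)) * √k
        ≤ (Nsph d k : ℝ) * (d ^ d * k ^ k * (2 * k * (k + d))) * √k := by gcongr
      _ = 2 * k * ((Nsph d k : ℝ) * (k + d) * (k ^ k * d ^ d) * √k) := by ring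
      _ ≤ 2 * k * (2 * d * (k + d).choose k * (k ^ k * d ^ d) * √k) := by
        gcongr 2 * k * (?_ * _ * _); exact Nsph_mul_add_le hd hk
      _ = 2 * k * (2 * d * ((k + d).choose k * (k ^ k * d ^ d)) * √k) := by ring
      _ ≤ 2 * k * (k + d) ^ (k + d + 1) := by
        gcongr; exact two_mul_mul_choose_mul_pow_mul_pow_le (by omega) (by omega)
  rw [rpow_neg_three_halves_eq hk₀, nuNT_eq_div d hk, ← mul_div_assoc, ← div_eq_mul_inv,
    div_le_div_iff₀ (by positivity) (by positivity)]
  linear_combination (k : ℝ) * key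

theorem Nsph_two (d : ℕ) : (Nsph d 2 : ℝ) = d * (d + 3) / 2 := by
  have hpos : 1 ≤ (2 + d).choose 2 := Nat.choose_pos (by omega)
  simp only [Nsph, OfNat.ofNat_ne_zero, if_false, le_refl, if_true, Nat.add_sub_cancel_left,
    Nat.sub_self, Nat.choose_zero_right]
  rw [Nat.cast_sub hpos, Nat.cast_choose_two]
  push_cast
  ring

theorem one_add_two_div_pow_le_exp_two (d : ℕ) : (1 + 2 / (d : ℝ)) ^ d ≤ exp 2 := by
  simpa [sub_eq_add_neg, neg_div] using
    one_sub_div_pow_le_exp_neg (n := d) (t := -2) (by linarith [(d.cast_nonneg : (0 : ℝ) ≤ d)])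

theorem exp_neg_two_div_two_le_Nsph_mul_nuNT_two {d : ℕ} (hd : 1 ≤ d) :
    exp (-2) / 2 ≤ (Nsph d 2 : ℝ) * nuNT d 2 := by
  have hd₁ : (1 : ℝ) ≤ d := by exact_mod_cast hd
  have hd₀ : (0 : ℝ) < d := by linarith
  have hpow : ((d : ℝ) + 2) ^ d ≤ exp 2 * d ^ d := by
    have := mul_le_mul_of_nonneg_left (one_add_two_div_pow_le_exp_two d) (pow_nonneg hd₀.le d)
    rwa [← mul_pow, mul_add, mul_one, mul_div_cancel₀ _ hd₀.ne', mul_comm] at this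
  have hcubic : ((d : ℝ) + 2) ^ 3 ≤ d * (d + 3) * (3 * d + 4) := by
    nlinarith [one_le_pow₀ (n := 2) hd₁, one_le_pow₀ (n := 3) hd₁]
  have hnu : nuNT d 2 = d ^ d * (3 * d + 4) / ((d : ℝ) + 2) ^ (d + 3) := by
    rw [nuNT_eq_div d (by norm_num), show 2 + d + 1 = d + 3 by omega]
    push_cast
    field_simp
    ring
  calc exp (-2) / 2 = (exp 2)⁻¹ * (1 / 2) := by rw [exp_neg]; ring
    _ ≤ (d ^ d / ((d : ℝ) + 2) ^ d) * (d * (d + 3) * (3 * d + 4) / (2 * ((d : ℝ) + 2) ^ 3)) := by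
      gcongr ?_ * ?_
      · rw [inv_eq_one_div, div_le_div_iff₀ (by positivity) (by positivity)]
        linarith
      · rw [div_le_div_iff₀ (by positivity) (by positivity)]
        linarith
    _ = (Nsph d 2 : ℝ) * nuNT d 2 := by
      rw [Nsph_two, hnu, pow_add]
      field_simp

theorem lamNT_nonneg (d k : ℕ) : 0 ≤ lamNT d k := by
  unfold lamNT nuNT
  split_ifs
  · exact zero_le_one
  · positivity

section MendelsonSum

variable {d : ℕ} {E : ℝ}

theorem Nsph_mul_min_lamNT_succ_le (hd : 1 ≤ d) (k : ℕ) :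
    (Nsph d (k + 1) : ℝ) * min (lamNT d (k + 1)) E ≤ 2 * ((k : ℝ) + 1) ^ (-(3 / 2 : ℝ)) := by
  calc (Nsph d (k + 1) : ℝ) * min (lamNT d (k + 1)) E ≤ Nsph d (k + 1) * nuNT d (k + 1) := by
        gcongr
        exact min_le_left _ _
    _ ≤ 2 * ((k : ℝ) + 1) ^ (-(3 / 2 : ℝ)) := by
        exact_mod_cast Nsph_mul_nuNT_le hd (Nat.le_add_left 1 k)

theorem summable_shifted_rpow_neg_three_halves :
    Summable (fun k : ℕ => ((k : ℝ) + 1) ^ (-(3 / 2 : ℝ))) := by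
  exact_mod_cast (summable_nat_add_iff 1).mpr (Real.summable_nat_rpow.mpr (by norm_num))

theorem summable_Nsph_mul_min_lamNT (hd : 1 ≤ d) (hE : 0 ≤ E) :
    Summable (fun k => (Nsph d k : ℝ) * min (lamNT d k) E) := by
  refine (summable_nat_add_iff 1).mp (Summable.of_nonneg_of_le (fun k => ?_)
    (Nsph_mul_min_lamNT_succ_le hd) (summable_shifted_rpow_neg_three_halves.mul_left 2))
  exact mul_nonneg (Nat.cast_nonneg _) (le_min (lamNT_nonneg d _) hE)

theorem tsum_Nsph_mul_min_lamNT_le (hd : 1 ≤ d) (hE : 0 ≤ E) :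
    ∑' k, (Nsph d k : ℝ) * min (lamNT d k) E ≤
      1 + 2 * ∑' k : ℕ, ((k : ℝ) + 1) ^ (-(3 / 2 : ℝ)) := by
  rw [(summable_Nsph_mul_min_lamNT hd hE).tsum_eq_zero_add, ← tsum_mul_left]
  refine add_le_add ?_ (Summable.tsum_le_tsum (Nsph_mul_min_lamNT_succ_le hd)
      ((summable_nat_add_iff 1).mpr (summable_Nsph_mul_min_lamNT hd hE))
      (summable_shifted_rpow_neg_three_halves.mul_left 2))
  simp [Nsph, lamNT]

theorem min_le_tsum_Nsph_mul_min_lamNT (hd : 1 ≤ d) (hE : 0 ≤ E) :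
    min (exp (-2) / 2) (d ^ 2 / 2 * E) ≤ ∑' k, (Nsph d k : ℝ) * min (lamNT d k) E := by
  have hNsph : (d : ℝ) ^ 2 / 2 ≤ Nsph d 2 := by
    rw [Nsph_two]
    nlinarith [(d.cast_nonneg : (0 : ℝ) ≤ d)]
  calc min (exp (-2) / 2) (d ^ 2 / 2 * E) ≤ Nsph d 2 * min (nuNT d 2) E := by
        rw [mul_min_of_nonneg _ _ (Nat.cast_nonneg _)]
        exact min_le_min (exp_neg_two_div_two_le_Nsph_mul_nuNT_two hd) (by gcongr)
    _ ≤ ∑' k, (Nsph d k : ℝ) * min (lamNT d k) E :=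
        (summable_Nsph_mul_min_lamNT hd hE).le_tsum 2
          (fun k _ => mul_nonneg (Nat.cast_nonneg _) (le_min (lamNT_nonneg d k) hE))

end MendelsonSum

theorem eventually_mul_rpow_le_mul_rpow {a b γ β : ℝ} (ha : 0 < a) (hγβ : γ < β) :
    ∀ᶠ x : ℝ in atTop, b * x ^ γ ≤ a * x ^ β := by
  filter_upwards [(tendsto_rpow_atTop (sub_pos.2 hγβ)).eventually_ge_atTop (b / a),
    eventually_gt_atTop 0] with x hx hx₀
  rw [div_le_iff₀' ha] at hx
  calc b * x ^ γ ≤ a * x ^ (β - γ) * x ^ γ := by gcongr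
    _ = a * x ^ β := by rw [mul_assoc, ← Real.rpow_add hx₀, sub_add_cancel]

theorem mul_inv_sqrt_le_iff {a x n : ℝ} (ha : 0 ≤ a) (hx : 0 ≤ x) (hn : 0 < n) :
    a * (√n)⁻¹ ≤ x ↔ a ^ 2 ≤ n * x ^ 2 := by
  rw [← div_eq_mul_inv, div_le_iff₀ (Real.sqrt_pos.2 hn),
    ← pow_le_pow_iff_left₀ ha (by positivity) two_ne_zero, mul_pow, Real.sq_sqrt hn.le, mul_comm]

theorem le_mul_inv_sqrt_iff {a x n : ℝ} (ha : 0 ≤ a) (hx : 0 ≤ x) (hn : 0 < n) :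
    x ≤ a * (√n)⁻¹ ↔ n * x ^ 2 ≤ a ^ 2 := by
  rw [← div_eq_mul_inv, le_div_iff₀ (Real.sqrt_pos.2 hn),
    ← pow_le_pow_iff_left₀ (by positivity) ha two_ne_zero, mul_pow, Real.sq_sqrt hn.le, mul_comm]

theorem mul_exp_neg_two_div_four_le_mul_sq {T n d E : ℝ} (hT : 0 < T) (hn : 0 < n) (hE : 0 < E)
    (hnd : n ≤ T * d ^ 4) (h : min (exp (-2) / 2) (d ^ 2 / 2 * E) ≤ n * E ^ 2 / T) :
    T * exp (-2) / 4 ≤ n * E ^ 2 := by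
  rw [le_div_iff₀ hT] at h
  rcases min_cases (exp (-2) / 2) (d ^ 2 / 2 * E) with ⟨hmin, -⟩ | ⟨hmin, -⟩ <;> rw [hmin] at h
  · nlinarith [exp_pos (-2)]
  · have hlin : T * d ^ 2 ≤ 2 * n * E := le_of_mul_le_mul_right (by linarith) hE
    have hquad : T * n ≤ (2 * n * E) ^ 2 :=
      calc T * n ≤ T * (T * d ^ 4) := by gcongr
        _ = (T * d ^ 2) ^ 2 := by ring
        _ ≤ (2 * n * E) ^ 2 := by gcongr
    have hT4 : T ≤ 4 * (n * E ^ 2) := le_of_mul_le_mul_right (by linarith) hn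
    nlinarith [exp_le_one_iff.mpr (show (-2 : ℝ) ≤ 0 by norm_num)]

/-- Constants C1, C2 > 0 depending only on c and σ: for every real γ with 0 < γ < 4 and all
0 < c1 ≤ c2 < ∞, for all large d and all integers n with c1·d^γ ≤ n ≤ c2·d^γ, the population
Mendelson complexity ε_n (the unique positive solution of
Σ_{k=0}^∞ N(d,k)·min{λ_d(k), ε²} = n·ε⁴/(c²σ²)) satisfies
C1·n^(−1/2) ≤ ε_n² ≤ C2·n^(−1/2). -/
theorem mendelson_complexity_bounds_small_gamma (c σ : ℝ) (hc : 0 < c) (hσ : 0 < σ) :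
    ∃ C1 C2 : ℝ, 0 < C1 ∧ 0 < C2 ∧
      ∀ γ : ℝ, 0 < γ → γ < 4 →
        ∀ c1 c2 : ℝ, 0 < c1 → c1 ≤ c2 →
          ∃ D : ℕ, ∀ d : ℕ, D ≤ d → ∀ n : ℕ,
            c1 * (d : ℝ) ^ γ ≤ (n : ℝ) → (n : ℝ) ≤ c2 * (d : ℝ) ^ γ →
            ∀ ε : ℝ, 0 < ε →
              (∑' k : ℕ, (Nsph d k : ℝ) * min (lamNT d k) (ε ^ 2)) =
                (n : ℝ) * ε ^ 4 / (c ^ 2 * σ ^ 2) →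
              C1 * (n : ℝ) ^ (-(1 / 2 : ℝ)) ≤ ε ^ 2 ∧
              ε ^ 2 ≤ C2 * (n : ℝ) ^ (-(1 / 2 : ℝ)) := by
  set M := 1 + 2 * ∑' k : ℕ, ((k : ℝ) + 1) ^ (-(3 / 2 : ℝ))
  have hM : 0 < M := by positivity
  refine ⟨c * σ * exp (-1) / 2, c * σ * √M, by positivity, by positivity, ?_⟩
  intro γ _ hγ c1 c2 hc1 _
  obtain ⟨D, hD⟩ := eventually_atTop.mp
    ((eventually_mul_rpow_le_mul_rpow (b := c2) (by positivity : 0 < c ^ 2 * σ ^ 2) hγ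
      |>.natCast_atTop).and (eventually_ge_atTop 1))
  refine ⟨D, fun d hdD n hn₁ hn₂ ε hε hsum => ?_⟩
  obtain ⟨hbig, hd⟩ := hD d hdD
  have hd₀ : (0 : ℝ) < d := by exact_mod_cast hd
  have hn : (0 : ℝ) < n := lt_of_lt_of_le (by positivity) hn₁
  have hnd : (n : ℝ) ≤ c ^ 2 * σ ^ 2 * d ^ 4 := hn₂.trans (by simpa using hbig)
  rw [show (ε ^ 4 : ℝ) = (ε ^ 2) ^ 2 by ring] at hsum
  rw [Real.rpow_neg hn.le, ← Real.sqrt_eq_rpow,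
    mul_inv_sqrt_le_iff (by positivity) (by positivity) hn,
    le_mul_inv_sqrt_iff (by positivity) (by positivity) hn]
  constructor
  · have := mul_exp_neg_two_div_four_le_mul_sq (by positivity) hn (by positivity) hnd
      (hsum ▸ min_le_tsum_Nsph_mul_min_lamNT hd (by positivity))
    convert this using 1
    rw [div_pow, mul_pow, mul_pow, ← exp_nat_mul]
    norm_num
  · have := hsum ▸ tsum_Nsph_mul_min_lamNT_le hd (sq_nonneg ε)
    rw [div_le_iff₀ (by positivity)] at this
    rw [mul_pow, mul_pow, Real.sq_sqrt hM.le]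
    linarith
end
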